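/- arXiv:2501.17870 — 3 statements merged into one kernel-verified Lean document; each statement's English description precedes it below -/
import Mathlib

section
/- (Erdős–de Bruijn compactness) Let G be a simple graph and k a natural number. If every finite subgraph of G admits a proper k-coloring of its vertices, then G admits a proper k-coloring. -/
/-- Erdős–de Bruijn compactness: if every finite (induced) subgraph of `G` has a
proper `k`-coloring, then so does `G`. -/
theorem colorable_of_finite_subgraphs_colorable {V : Type*} (G : SimpleGraph V)
    (k : ℕ) (h : ∀ S : Finset V, (G.induce (S : Set V)).Colorable k) :
    G.Colorable k := by
  classical
  cases isEmpty_or_nonempty V with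
  | inl hV => exact ⟨⟨fun v => isEmptyElim v, fun {a} => isEmptyElim a⟩⟩
  | inr hV =>
    obtain ⟨v0⟩ := hV
    have hk : Nonempty (Fin k) := by
      obtain ⟨c⟩ := h {v0}
      exact ⟨c ⟨v0, by simp⟩⟩
    letI : TopologicalSpace (Fin k) := ⊥
    haveI : DiscreteTopology (Fin k) := ⟨rfl⟩
    set C : Finset V → Set (V → Fin k) :=
      fun S => {f | ∀ a ∈ S, ∀ b ∈ S, G.Adj a b → f a ≠ f b} with hC
    have hdir : Directed (· ⊇ ·) C := by
      intro S T
      refine ⟨S ∪ T, ?_, ?_⟩ <;>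
        · intro f hf a ha b hb hab
          exact hf a (by simp [ha]) b (by simp [hb]) hab
    have hne : ∀ S, (C S).Nonempty := by
      intro S
      obtain ⟨c⟩ := h S
      refine ⟨fun v => if hv : v ∈ S then c ⟨v, hv⟩ else Classical.arbitrary _, ?_⟩
      intro a ha b hb hab
      simp only [ha, hb, dif_pos]
      exact c.valid (by exact hab)
    have hcl : ∀ S, IsClosed (C S) := by
      intro S
      have : C S = ⋂ a ∈ S, ⋂ b ∈ S,
          {f : V → Fin k | G.Adj a b → f a ≠ f b} := by
        ext f; simp [hC]
      rw [this]
      refine isClosed_biInter fun a _ => isClosed_biInter fun b _ => ?_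
      by_cases hab : G.Adj a b
      · simp only [hab, forall_true_left]
        have : {f : V → Fin k | f a ≠ f b} =
            (fun f : V → Fin k => (f a, f b)) ⁻¹' {p | p.1 ≠ p.2} := rfl
        rw [this]
        exact (isClosed_discrete _).preimage
          ((continuous_apply a).prodMk (continuous_apply b))
      · simp [hab]
    have hcomp : ∀ S, IsCompact (C S) := fun S => (hcl S).isCompact
    obtain ⟨f, hf⟩ := IsCompact.nonempty_iInter_of_directed_nonempty_isCompact_isClosed
      C hdir hne hcomp hcl
    simp only [Set.mem_iInter] at hf
    exact ⟨⟨f, fun {a b} hab => hf {a, b} a (by simp) b (by simp) hab⟩⟩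
end

section
/- (Cantor–Bernstein for matchings) Let G be a bipartite simple graph with bipartition (X, Y). If there exists a matching covering every vertex of X and a matching covering every vertex of Y, then G admits a perfect matching. -/
/-!
König's proof of Cantor–Bernstein, run inside the graph. The matchings give partner maps
`f : X → Y` (along `M`) and `g : Y → X` (along `M'`), and Banach's decomposition yields
`S ⊆ X` with `X \ S = g '' (Y \ f '' S)`. Matching `S` to `f '' S` along `M` and
`Y \ f '' S` to its image under `g` along `M'` then covers every vertex exactly once.
-/

/-- A matching of `G` as a set of pairwise disjoint edges. -/
def IsMatchingSet {V : Type*} (G : SimpleGraph V) (M : Set (Sym2 V)) : Prop :=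
  M ⊆ G.edgeSet ∧ M.Pairwise fun e f => ∀ v : V, v ∈ e → v ∉ f

theorem exists_eq_diff_image_diff_image {α β : Type*} (X : Set α) (Y : Set β) (f : α → β)
    (g : β → α) : ∃ S : Set α, S = X \ g '' (Y \ f '' S) := by
  let F : Set α →o Set α :=
    ⟨fun S => X \ g '' (Y \ f '' S), fun _ _ h => by dsimp only; gcongr⟩
  exact ⟨F.lfp, F.map_lfp.symm⟩

section Matching

variable {V : Type*} {G : SimpleGraph V}

theorem IsMatchingSet.mono {M N : Set (Sym2 V)} (hM : IsMatchingSet G M) (hNM : N ⊆ M) :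
    IsMatchingSet G N :=
  ⟨hNM.trans hM.1, hM.2.mono hNM⟩

theorem IsMatchingSet.union {M N : Set (Sym2 V)} (hM : IsMatchingSet G M)
    (hN : IsMatchingSet G N) (hMN : ∀ e ∈ M, ∀ e' ∈ N, ∀ v ∈ e, v ∉ e') :
    IsMatchingSet G (M ∪ N) := by
  refine ⟨Set.union_subset hM.1 hN.1, ?_⟩
  rintro e (he | he) e' (he' | he') hne v hv hv'
  · exact hM.2 he he' hne v hv hv'
  · exact hMN e he e' he' v hv hv'
  · exact hMN e' he' e he v hv' hv
  · exact hN.2 he he' hne v hv hv'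

theorem exists_partner_of_forall_mem {X Y : Set V} {M : Set (Sym2 V)}
    (hXY : ∀ ⦃u v⦄, G.Adj u v → u ∈ X → v ∈ Y) (hM : M ⊆ G.edgeSet)
    (hX : ∀ x ∈ X, ∃ e ∈ M, x ∈ e) : ∃ f : V → V, ∀ x ∈ X, f x ∈ Y ∧ s(x, f x) ∈ M := by
  have h : ∀ x, ∃ y, x ∈ X → y ∈ Y ∧ s(x, y) ∈ M := by
    intro x
    by_cases hx : x ∈ X
    · obtain ⟨e, he, hxe⟩ := hX x hx
      obtain ⟨y, rfl⟩ := Sym2.mem_iff_exists.mp hxe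
      exact ⟨y, fun _ => ⟨hXY (hM he) hx, he⟩⟩
    · exact ⟨x, fun h => absurd h hx⟩
  choose f hf using h
  exact ⟨f, hf⟩

theorem isMatchingSet_union_of_eq_diff_image {X Y S : Set V} {M M' : Set (Sym2 V)}
    {f g : V → V} (hdisj : Disjoint X Y) (hM : IsMatchingSet G M) (hM' : IsMatchingSet G M')
    (hf : ∀ x ∈ X, f x ∈ Y ∧ s(x, f x) ∈ M) (hg : ∀ y ∈ Y, g y ∈ X ∧ s(y, g y) ∈ M')
    (hS : S = X \ g '' (Y \ f '' S)) :
    IsMatchingSet G ((fun x => s(x, f x)) '' S ∪ (fun y => s(y, g y)) '' (Y \ f '' S)) := by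
  have hSX : S ⊆ X := hS ▸ Set.sdiff_subset
  refine (hM.mono ?_).union (hM'.mono ?_) ?_
  · exact Set.image_subset_iff.2 fun x hx => (hf x (hSX hx)).2
  · exact Set.image_subset_iff.2 fun y hy => (hg y hy.1).2
  rintro _ ⟨x, hx, rfl⟩ _ ⟨y, hy, rfl⟩ v hvx hvy
  rw [Sym2.mem_iff] at hvx hvy
  rcases hvx with rfl | rfl <;> rcases hvy with hvy | hvy
  · exact hdisj.ne_of_mem (hSX hx) hy.1 hvy
  · exact (hS ▸ hx).2 ⟨y, hy, hvy.symm⟩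
  · exact hy.2 ⟨x, hx, hvy⟩
  · exact hdisj.ne_of_mem (hg y hy.1).1 (hf x (hSX hx)).1 hvy.symm

theorem forall_exists_mem_union_of_eq_diff_image {X Y S : Set V} {f g : V → V}
    (hunion : X ∪ Y = Set.univ) (hS : S = X \ g '' (Y \ f '' S)) (v : V) :
    ∃ e ∈ (fun x => s(x, f x)) '' S ∪ (fun y => s(y, g y)) '' (Y \ f '' S), v ∈ e := by
  by_cases hvS : v ∈ S
  · exact ⟨_, .inl ⟨v, hvS, rfl⟩, Sym2.mem_mk_left _ _⟩
  by_cases hvf : v ∈ f '' S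
  · obtain ⟨x, hx, rfl⟩ := hvf
    exact ⟨_, .inl ⟨x, hx, rfl⟩, Sym2.mem_mk_right _ _⟩
  obtain hvX | hvY : v ∈ X ∪ Y := hunion ▸ Set.mem_univ v
  · obtain ⟨y, hy, rfl⟩ : v ∈ g '' (Y \ f '' S) := by
      by_contra h
      exact hvS (hS ▸ ⟨hvX, h⟩)
    exact ⟨_, .inr ⟨y, hy, rfl⟩, Sym2.mem_mk_right _ _⟩
  · exact ⟨_, .inr ⟨v, ⟨hvY, hvf⟩, rfl⟩, Sym2.mem_mk_left _ _⟩

end Matching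

/-- Cantor–Bernstein for matchings: if a bipartite graph with bipartition
`(X, Y)` has a matching covering all of `X` and a matching covering all of `Y`,
then it has a perfect matching. -/
theorem exists_perfect_matching_of_matchings_covering_both_sides {V : Type*}
    (G : SimpleGraph V) (X Y : Set V) (hdisj : Disjoint X Y)
    (hunion : X ∪ Y = Set.univ)
    (hbip : ∀ ⦃u v : V⦄, G.Adj u v → (u ∈ X ∧ v ∈ Y) ∨ (u ∈ Y ∧ v ∈ X))
    (M M' : Set (Sym2 V)) (hM : IsMatchingSet G M) (hM' : IsMatchingSet G M')
    (hX : ∀ x ∈ X, ∃ e ∈ M, x ∈ e) (hY : ∀ y ∈ Y, ∃ e ∈ M', y ∈ e) :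
    ∃ N : Set (Sym2 V), IsMatchingSet G N ∧ ∀ v : V, ∃ e ∈ N, v ∈ e := by
  have hXY : ∀ ⦃u v⦄, G.Adj u v → u ∈ X → v ∈ Y := fun u v huv hu =>
    ((hbip huv).resolve_right fun h => Set.disjoint_left.mp hdisj hu h.1).2
  have hYX : ∀ ⦃u v⦄, G.Adj u v → u ∈ Y → v ∈ X := fun u v huv hu =>
    ((hbip huv).resolve_left fun h => Set.disjoint_left.mp hdisj h.1 hu).2
  obtain ⟨f, hf⟩ := exists_partner_of_forall_mem hXY hM.1 hX
  obtain ⟨g, hg⟩ := exists_partner_of_forall_mem hYX hM'.1 hY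
  obtain ⟨S, hS⟩ := exists_eq_diff_image_diff_image X Y f g
  exact ⟨_, isMatchingSet_union_of_eq_diff_image hdisj hM hM' hf hg hS,
    forall_exists_mem_union_of_eq_diff_image hunion hS⟩
end

section
/- Let G be an infinite, connected, non-complete simple graph. Then κ(G) ≤ κ'(G) ≤ δ(G), where κ(G) is the vertex connectivity, κ'(G) the edge connectivity, and δ(G) the minimum degree, all as cardinals. -/
open Cardinal

universe u

/-- The vertex connectivity of `G`: the least cardinality of a set `S` of
vertices whose removal disconnects `G`. -/
noncomputable def vertexConnectivity {V : Type u} (G : SimpleGraph V) :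
    Cardinal.{u} :=
  sInf {c : Cardinal.{u} | ∃ S : Set V, c = #S ∧
    ¬ (G.induce (Sᶜ : Set V)).Preconnected}

/-- The edge connectivity of `G`: the least cardinality of a set `L` of edges
whose removal disconnects `G`. -/
noncomputable def edgeConnectivity {V : Type u} (G : SimpleGraph V) :
    Cardinal.{u} :=
  sInf {c : Cardinal.{u} | ∃ L : Set (Sym2 V), L ⊆ G.edgeSet ∧ c = #L ∧
    ¬ (G.deleteEdges L).Preconnected}

/-!
Given an edge cut `L`, let `A` be the set of vertices reachable from `a` in `G - L`. Every edge
leaving `A` lies in `L`, so the vertices of `A` with a neighbour outside `A`, and those outside `A`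
with a neighbour in `A`, number at most `#L` each, and each of these two sets separates any vertex
avoiding it from the other side. If `#L < #V`, then since `V` is infinite some vertex avoids both
sets, which gives a vertex cut of size at most `#L`; otherwise all vertices but two non-adjacent
ones form a vertex cut. The edges at a vertex form an edge cut of the size of its degree.
-/

namespace SimpleGraph

variable {V : Type u} {G : SimpleGraph V}

def innerBoundary (G : SimpleGraph V) (A : Set V) : Set V :=
  {x | x ∈ A ∧ ∃ y, y ∉ A ∧ G.Adj x y}

lemma not_preconnected_induce_compl {S : Set V} {x y : V} (hx : x ∉ S) (hy : y ∉ S)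
    (hmeet : ∀ p : G.Walk x y, ∃ z ∈ p.support, z ∈ S) :
    ¬ (G.induce Sᶜ).Preconnected := by
  intro h
  obtain ⟨q⟩ := h ⟨x, hx⟩ ⟨y, hy⟩
  obtain ⟨z, hz, hzS⟩ : ∃ z ∈ (q.map (Embedding.induce Sᶜ).toHom).support, z ∈ S := hmeet _
  rw [Walk.support_map, List.mem_map] at hz
  obtain ⟨z', -, rfl⟩ := hz
  exact z'.2 hzS

lemma not_preconnected_induce_compl_innerBoundary {A : Set V} {x y : V} (hxA : x ∈ A)
    (hx : x ∉ G.innerBoundary A) (hy : y ∉ A) :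
    ¬ (G.induce (G.innerBoundary A)ᶜ).Preconnected := by
  refine not_preconnected_induce_compl hx (fun h => hy h.1) fun p => ?_
  obtain ⟨d, hd, hdA, hdA'⟩ := p.exists_boundary_dart A hxA hy
  exact ⟨d.fst, Walk.dart_fst_mem_support_of_mem_darts p hd, hdA, d.snd, hdA', d.adj⟩

lemma mk_innerBoundary_le {A : Set V} {L : Set (Sym2 V)}
    (hcross : ∀ x ∈ A, ∀ y ∉ A, G.Adj x y → s(x, y) ∈ L) :
    #(G.innerBoundary A) ≤ #L := by
  choose out hout hadj using fun x : G.innerBoundary A => x.2.2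
  refine mk_le_of_injective (f := fun x => ⟨s(x, out x), hcross x x.2.1 _ (hout x) (hadj x)⟩) ?_
  intro x₁ x₂ h
  simp only [Subtype.mk.injEq, Sym2.eq_iff] at h
  rcases h with ⟨h, -⟩ | ⟨h, -⟩
  · exact Subtype.ext h
  · exact absurd (h ▸ x₁.2.1) (hout x₂)

lemma vertexConnectivity_le_mk {S : Set V} (h : ¬ (G.induce Sᶜ).Preconnected) :
    vertexConnectivity G ≤ #S :=
  csInf_le' ⟨S, rfl, h⟩

lemma vertexConnectivity_le_mk_univ (hG : G ≠ ⊤) : vertexConnectivity G ≤ #V := by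
  obtain ⟨x, y, hxy, hnadj⟩ : ∃ x y : V, x ≠ y ∧ ¬ G.Adj x y := by
    by_contra! h
    exact hG (by ext x y; exact ⟨Adj.ne, h x y⟩)
  have hx : x ∉ ({x, y} : Set V)ᶜ := by simp
  have hy : y ∉ ({x, y} : Set V)ᶜ := by simp
  refine (vertexConnectivity_le_mk (not_preconnected_induce_compl hx hy fun p => ?_)).trans
    (mk_set_le _)
  obtain ⟨d, hd, hdx, hdx'⟩ := p.exists_boundary_dart {x} rfl hxy.symm
  rw [Set.mem_singleton_iff] at hdx
  have hdy : d.snd ≠ y := fun h => hnadj (hdx ▸ h ▸ d.adj)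
  exact ⟨d.snd, Walk.dart_snd_mem_support_of_mem_darts p hd, by simp_all⟩

lemma vertexConnectivity_le_mk_of_not_preconnected_deleteEdges [Infinite V] (hG : G ≠ ⊤)
    {L : Set (Sym2 V)} (hL : ¬ (G.deleteEdges L).Preconnected) :
    vertexConnectivity G ≤ #L := by
  by_cases hVL : #V ≤ #L
  · exact (vertexConnectivity_le_mk_univ hG).trans hVL
  obtain ⟨a, b, hab⟩ : ∃ a b, ¬ (G.deleteEdges L).Reachable a b := by
    simpa [Preconnected] using hL
  set A : Set V := {x | (G.deleteEdges L).Reachable a x}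
  have haA : a ∈ A := Reachable.refl a
  have hcross : ∀ x ∈ A, ∀ y ∉ A, G.Adj x y → s(x, y) ∈ L := fun x hx y hy hxy => by
    by_contra hL
    exact hy (hx.trans (deleteEdges_adj.2 ⟨hxy, hL⟩).reachable)
  have hcross' : ∀ x ∈ Aᶜ, ∀ y ∉ Aᶜ, G.Adj x y → s(x, y) ∈ L := fun x hx y hy hxy => by
    rw [Sym2.eq_swap]
    exact hcross y (not_not.1 hy) x hx hxy.symm
  obtain ⟨w, hw⟩ : ∃ w, w ∉ G.innerBoundary A ∪ G.innerBoundary Aᶜ := by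
    by_contra! h
    refine (add_lt_of_lt (aleph0_le_mk V) (not_le.1 hVL) (not_le.1 hVL)).not_ge ?_
    calc #V ≤ #(G.innerBoundary A ∪ G.innerBoundary Aᶜ : Set V) :=
          mk_le_of_injective (f := fun v => ⟨v, h v⟩) fun _ _ h => congrArg Subtype.val h
      _ ≤ #(G.innerBoundary A) + #(G.innerBoundary Aᶜ) := mk_union_le _ _
      _ ≤ #L + #L := add_le_add (mk_innerBoundary_le hcross) (mk_innerBoundary_le hcross')
  rw [Set.mem_union, not_or] at hw
  by_cases hwA : w ∈ A
  · exact (vertexConnectivity_le_mk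
      (not_preconnected_induce_compl_innerBoundary hwA hw.1 hab)).trans
      (mk_innerBoundary_le hcross)
  · exact (vertexConnectivity_le_mk
      (not_preconnected_induce_compl_innerBoundary (A := Aᶜ) hwA hw.2 (not_not.2 haA))).trans
      (mk_innerBoundary_le hcross')

lemma not_preconnected_deleteEdges_incidenceSet [Nontrivial V] (v : V) :
    ¬ (G.deleteEdges (G.incidenceSet v)).Preconnected := by
  intro h
  obtain ⟨u, hu⟩ := exists_ne v
  obtain ⟨q⟩ := h v u
  have hadj := deleteEdges_adj.1 (q.adj_snd (Walk.not_nil_of_ne hu.symm))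
  exact hadj.2 ⟨hadj.1, Sym2.mem_mk_left _ _⟩

lemma edgeConnectivity_le_mk_incidenceSet [Nontrivial V] (v : V) :
    edgeConnectivity G ≤ #(G.incidenceSet v) :=
  csInf_le' ⟨_, G.incidenceSet_subset v, rfl, not_preconnected_deleteEdges_incidenceSet v⟩

lemma edgeConnectivity_le_mk_neighborSet [Nontrivial V] (v : V) :
    edgeConnectivity G ≤ #(G.neighborSet v) := by
  classical
  exact (edgeConnectivity_le_mk_incidenceSet v).trans_eq
    (mk_congr (G.incidenceSetEquivNeighborSet v))

lemma vertexConnectivity_le_edgeConnectivity [Infinite V] (hG : G ≠ ⊤) :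
    vertexConnectivity G ≤ edgeConnectivity G := by
  refine le_csInf ⟨_, _, G.incidenceSet_subset (Classical.arbitrary V), rfl,
    not_preconnected_deleteEdges_incidenceSet _⟩ ?_
  rintro _ ⟨L, -, rfl, hL⟩
  exact vertexConnectivity_le_mk_of_not_preconnected_deleteEdges hG hL

end SimpleGraph

theorem vertexConnectivity_le_edgeConnectivity_le_minDegree_general {V : Type u}
    [Infinite V] (G : SimpleGraph V)
    (hnc : G ≠ (⊤ : SimpleGraph V)) :
    vertexConnectivity G ≤ edgeConnectivity G ∧
      edgeConnectivity G ≤ ⨅ v : V, #(G.neighborSet v) :=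
  ⟨G.vertexConnectivity_le_edgeConnectivity hnc,
    le_ciInf G.edgeConnectivity_le_mk_neighborSet⟩

/-- For an infinite, connected, non-complete simple graph,
`κ(G) ≤ κ'(G) ≤ δ(G)`. -/
theorem vertexConnectivity_le_edgeConnectivity_le_minDegree {V : Type u}
    [Infinite V] (G : SimpleGraph V) (hconn : G.Connected)
    (hnc : G ≠ (⊤ : SimpleGraph V)) :
    vertexConnectivity G ≤ edgeConnectivity G ∧
      edgeConnectivity G ≤ ⨅ v : V, #(G.neighborSet v) :=
  vertexConnectivity_le_edgeConnectivity_le_minDegree_general G hnc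
end
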